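/- arXiv:1810.07979 — 7 statements merged into one kernel-verified Lean document; each statement's English description precedes it below -/
import Mathlib

section
/- Let (X,𝓔) be a ballean. If cof⋆(𝓔) ≤ add(B_X), then the ballean X is normal. Here add(B_X) is the smallest cardinality of a family of bounded subsets of X having no bounded upper bound under inclusion; for A ⊆ X, cof_*(𝓔[A]) is the smallest cardinality of a subfamily 𝒞 ⊆ 𝓔 such that for every E ∈ 𝓔 there exists C ∈ 𝒞 with E[A] \ C[A] bounded; and cof⋆(𝓔) = sup_{A ⊆ X} cof_*(𝓔[A]). -/
/-!
Let `κ = add(B_X)`. Unless `𝓔 = ∅`, we have `κ ≥ cof_*(𝓔[A]) > 0`, and then `κ` is infinite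
because finite unions of bounded sets are bounded. Choose families `𝒞_A, 𝒞_C ⊆ 𝓔` of size at
most `κ` witnessing `cof_*(𝓔[A])` and `cof_*(𝓔[C])`, and well-order `𝒟 = 𝒞_A ∪ 𝒞_C` in order
type `|𝒟|`, so that every initial segment of `𝒟` has fewer than `κ` elements. Let `U` consist
of the points that lie in some `D[A]` but in no `D'[C]` with `D' ≤ D`, and let `V` be defined
symmetrically; linearity of the order makes `U` and `V` disjoint. Given `E ∈ 𝓔`, pick `D ∈ 𝒟`
with `E[A] \ D[A]` bounded. Then `E[A] \ U` is covered by this set and by the union of the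
fewer than `κ` sets `D[A] ∩ D'[C]`, `D' ≤ D`, each bounded by asymptotic disjointness, so their
union is bounded by the choice of `κ`.
-/

universe u v

open Set

/-- A ballean: a set `X` with a family of entourages satisfying the three axioms. -/
structure Ballean (X : Type u) : Type u where
  entourages : Set (Set (X × X))
  diag_mem : ∀ E ∈ entourages, ∀ x : X, (x, x) ∈ E
  comp_inv_sub : ∀ E ∈ entourages, ∀ F ∈ entourages, ∃ D ∈ entourages,
      {p : X × X | ∃ y : X, (p.1, y) ∈ E ∧ (p.2, y) ∈ F} ⊆ D
  sUnion_eq_univ : ⋃₀ entourages = Set.univ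

namespace Ballean

variable {X : Type u}

/-- The ball `E[x]` of radius `E` centered at `x`. -/
def ball (E : Set (X × X)) (x : X) : Set X := {y | (x, y) ∈ E}

/-- The `E`-neighborhood `E[A]` of a set `A`. -/
def img (E : Set (X × X)) (A : Set X) : Set X := {y | ∃ a ∈ A, (a, y) ∈ E}

/-- A subset is bounded if it is contained in some ball. -/
def IsBounded (B : Ballean X) (S : Set X) : Prop :=
  ∃ E ∈ B.entourages, ∃ x : X, S ⊆ ball E x

def Unbounded (B : Ballean X) : Prop := ¬ B.IsBounded Set.univ

/-- Two sets are asymptotically disjoint if `E[A] ∩ E[C]` is bounded for all entourages. -/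
def AsympDisjoint (B : Ballean X) (A C : Set X) : Prop :=
  ∀ E ∈ B.entourages, B.IsBounded (img E A ∩ img E C)

/-- `U` is an asymptotic neighborhood of `A` if `E[A] \ U` is bounded for all entourages. -/
def AsympNbhd (B : Ballean X) (A U : Set X) : Prop :=
  ∀ E ∈ B.entourages, B.IsBounded (img E A \ U)

/-- A ballean is normal if asymptotically disjoint sets have disjoint asymptotic
neighborhoods. -/
def Normal (B : Ballean X) : Prop :=
  ∀ A C : Set X, B.AsympDisjoint A C →
    ∃ U V : Set X, B.AsympNbhd A U ∧ B.AsympNbhd C V ∧ Disjoint U V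

/-- A ballean is ultranormal if it contains no two unbounded asymptotically disjoint sets. -/
def Ultranormal (B : Ballean X) : Prop :=
  ∀ A C : Set X, B.AsympDisjoint A C → B.IsBounded A ∨ B.IsBounded C

/-- A ballean is discrete if it is unbounded and every entourage acts trivially
outside a bounded set. -/
def Discrete (B : Ballean X) : Prop :=
  B.Unbounded ∧ ∀ E ∈ B.entourages, ∃ S : Set X, B.IsBounded S ∧
    ∀ x ∉ S, ball E x = {x}

/-- A ballean has bounded growth if there is a growth entourage `G`. -/
def BoundedGrowth (B : Ballean X) : Prop :=
  ∃ G : Set (X × X),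
    (∀ S : Set X, B.IsBounded S → B.IsBounded (img G S)) ∧
    (∀ E ∈ B.entourages, ∃ S : Set X, B.IsBounded S ∧ ∀ x ∉ S, ball E x ⊆ ball G x)

/-- The bornology of a ballean has a linearly ordered base. -/
def HasLinearBornBase (B : Ballean X) : Prop :=
  ∃ 𝒞 : Set (Set X), (∀ C ∈ 𝒞, B.IsBounded C) ∧
    (∀ C ∈ 𝒞, ∀ D ∈ 𝒞, C ⊆ D ∨ D ⊆ C) ∧
    ∀ S : Set X, B.IsBounded S → ∃ C ∈ 𝒞, S ⊆ C

/-- The additivity of the bornology: the smallest cardinality of a family of bounded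
sets with no bounded upper bound. -/
noncomputable def addBorn (B : Ballean X) : Cardinal.{u} :=
  sInf {c | ∃ 𝒜 : Set (Set X), (∀ A ∈ 𝒜, B.IsBounded A) ∧
    (¬ ∃ D : Set X, B.IsBounded D ∧ ∀ A ∈ 𝒜, A ⊆ D) ∧ c = Cardinal.mk ↥𝒜}

/-- The cofinality of the bornology: the smallest cardinality of a base of the bornology. -/
noncomputable def cofBorn (B : Ballean X) : Cardinal.{u} :=
  sInf {c | ∃ 𝒞 : Set (Set X), (∀ C ∈ 𝒞, B.IsBounded C) ∧
    (∀ S : Set X, B.IsBounded S → ∃ C ∈ 𝒞, S ⊆ C) ∧ c = Cardinal.mk ↥𝒞}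

/-- The cofinality of the family of entourages. -/
noncomputable def cofEnt (B : Ballean X) : Cardinal.{u} :=
  sInf {c | ∃ 𝒞 : Set (Set (X × X)), 𝒞 ⊆ B.entourages ∧
    (∀ E ∈ B.entourages, ∃ C ∈ 𝒞, E ⊆ C) ∧ c = Cardinal.mk ↥𝒞}

/-- A ballean is `cof`-regular if `cof(𝓔) = cof(B_X)`. -/
def CofRegular (B : Ballean X) : Prop := B.cofEnt = B.cofBorn

end Ballean

/-- The entourages of the product of two balleans. -/
def prodEnt {X Y : Type u} (BX : Ballean X) (BY : Ballean Y) :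
    Set (Set ((X × Y) × (X × Y))) :=
  {E | ∃ EX ∈ BX.entourages, ∃ EY ∈ BY.entourages,
    E = {p | (p.1.1, p.2.1) ∈ EX ∧ (p.1.2, p.2.2) ∈ EY}}

/-- The entourages of the box-product of a family of balleans. -/
def boxEnt {I : Type v} {X : I → Type u} (B : ∀ i, Ballean (X i)) :
    Set (Set ((∀ i, X i) × (∀ i, X i))) :=
  {E | ∃ F : ∀ i, Set (X i × X i), (∀ i, F i ∈ (B i).entourages) ∧
    E = {p | ∀ i, (p.1 i, p.2 i) ∈ F i}}

/-- The entourages of the `n`-th power of a ballean. -/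
def powEnt {X : Type u} (B : Ballean X) (n : ℕ) :
    Set (Set ((Fin n → X) × (Fin n → X))) :=
  {E | ∃ F : Fin n → Set (X × X), (∀ i, F i ∈ B.entourages) ∧
    E = {p | ∀ i, (p.1 i, p.2 i) ∈ F i}}

namespace Ballean

/-- `cof_*(𝓔[A])`: the smallest cardinality of a subfamily `𝒞 ⊆ 𝓔` such that for every
`E ∈ 𝓔` there is `C ∈ 𝒞` with `E[A] \ C[A]` bounded. -/
noncomputable def cofStarAt {X : Type u} (B : Ballean X) (A : Set X) : Cardinal.{u} :=
  sInf {c | ∃ 𝒞 : Set (Set (X × X)), 𝒞 ⊆ B.entourages ∧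
    (∀ E ∈ B.entourages, ∃ C ∈ 𝒞, B.IsBounded (img E A \ img C A)) ∧
    c = Cardinal.mk ↥𝒞}

/-- `cof⋆(𝓔) = sup_{A ⊆ X} cof_*(𝓔[A])`. -/
noncomputable def cofStar {X : Type u} (B : Ballean X) : Cardinal.{u} :=
  ⨆ A : Set X, B.cofStarAt A

end Ballean

namespace Ballean

variable {X : Type u}

theorem img_mono {E F : Set (X × X)} (h : E ⊆ F) (A : Set X) : img E A ⊆ img F A :=
  fun _ ⟨a, ha, hay⟩ => ⟨a, ha, h hay⟩

variable (B : Ballean X)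

theorem exists_superset_swap_mem {E : Set (X × X)} (hE : E ∈ B.entourages) :
    ∃ D ∈ B.entourages, E ⊆ D ∧ ∀ x y, (x, y) ∈ E → (y, x) ∈ D := by
  obtain ⟨D, hD, hsub⟩ := B.comp_inv_sub E hE E hE
  exact ⟨D, hD, fun ⟨x, y⟩ hxy => hsub ⟨y, hxy, B.diag_mem E hE y⟩,
    fun x y hxy => hsub ⟨y, B.diag_mem E hE y, hxy⟩⟩

theorem directedOn_entourages : DirectedOn (· ⊆ ·) B.entourages := by
  intro E hE F hF
  obtain ⟨D₁, hD₁, hsub⟩ := B.comp_inv_sub E hE F hF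
  obtain ⟨D, hD, hD₁D, hswap⟩ := B.exists_superset_swap_mem hD₁
  exact ⟨D, hD, fun ⟨x, y⟩ hxy => hD₁D (hsub ⟨y, hxy, B.diag_mem F hF y⟩),
    fun ⟨x, y⟩ hxy => hswap y x (hsub ⟨y, B.diag_mem E hE y, hxy⟩)⟩

theorem exists_comp_subset {E F : Set (X × X)} (hE : E ∈ B.entourages)
    (hF : F ∈ B.entourages) :
    ∃ D ∈ B.entourages, ∀ x y z, (x, y) ∈ E → (y, z) ∈ F → (x, z) ∈ D := by
  obtain ⟨F', hF', -, hswap⟩ := B.exists_superset_swap_mem hF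
  obtain ⟨D, hD, hsub⟩ := B.comp_inv_sub E hE F' hF'
  exact ⟨D, hD, fun x y z hxy hyz => hsub ⟨y, hxy, hswap y z hyz⟩⟩

variable {B}

theorem IsBounded.subset {S T : Set X} (hT : B.IsBounded T) (h : S ⊆ T) : B.IsBounded S :=
  let ⟨E, hE, x, hx⟩ := hT
  ⟨E, hE, x, h.trans hx⟩

theorem IsBounded.union {S T : Set X} (hS : B.IsBounded S) (hT : B.IsBounded T) :
    B.IsBounded (S ∪ T) := by
  obtain ⟨E, hE, x, hx⟩ := hS
  obtain ⟨F, hF, y, hy⟩ := hT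
  obtain ⟨G, hG, hxy⟩ : (x, y) ∈ ⋃₀ B.entourages := B.sUnion_eq_univ ▸ mem_univ _
  obtain ⟨D₁, hD₁, hcomp⟩ := B.exists_comp_subset hG hF
  obtain ⟨D, hD, hED, hD₁D⟩ := B.directedOn_entourages E hE D₁ hD₁
  refine ⟨D, hD, x, ?_⟩
  rintro z (hz | hz)
  · exact hED (hx hz)
  · exact hD₁D (hcomp x y z hxy (hy hz))

theorem isBounded_sUnion (hempty : B.IsBounded ∅) {𝒜 : Set (Set X)} (hfin : 𝒜.Finite)
    (h𝒜 : ∀ S ∈ 𝒜, B.IsBounded S) : B.IsBounded (⋃₀ 𝒜) := by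
  induction 𝒜, hfin using Set.Finite.induction_on with
  | empty => simpa using hempty
  | insert _ _ ih =>
    rw [sUnion_insert]
    exact (h𝒜 _ (mem_insert _ _)).union (ih fun S hS => h𝒜 S (mem_insert_of_mem _ hS))

theorem AsympDisjoint.symm {A C : Set X} (h : B.AsympDisjoint A C) : B.AsympDisjoint C A :=
  fun E hE => inter_comm (img E A) _ ▸ h E hE

theorem AsympDisjoint.isBounded_inter_img {A C : Set X} (h : B.AsympDisjoint A C)
    {E F : Set (X × X)} (hE : E ∈ B.entourages) (hF : F ∈ B.entourages) :
    B.IsBounded (img E A ∩ img F C) := by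
  obtain ⟨G, hG, hEG, hFG⟩ := B.directedOn_entourages E hE F hF
  exact (h G hG).subset (inter_subset_inter (img_mono hEG A) (img_mono hFG C))

variable (B)

theorem addBorn_le_mk {𝒜 : Set (Set X)} (h𝒜 : ∀ A ∈ 𝒜, B.IsBounded A)
    (hunb : ¬ ∃ D, B.IsBounded D ∧ ∀ A ∈ 𝒜, A ⊆ D) : B.addBorn ≤ Cardinal.mk 𝒜 :=
  csInf_le' ⟨𝒜, h𝒜, hunb, rfl⟩

theorem aleph0_le_addBorn (h : B.addBorn ≠ 0) : Cardinal.aleph0 ≤ B.addBorn := by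
  unfold addBorn at h ⊢
  rw [Ne, Cardinal.sInf_eq_zero_iff, not_or, ← Ne, ← nonempty_iff_ne_empty] at h
  obtain ⟨hne, hnz⟩ := h
  have hempty : B.IsBounded ∅ := by
    by_contra hunb
    exact hnz ⟨0, ⟨∅, by simp, fun ⟨D, hD, _⟩ => hunb (hD.subset (empty_subset D)), by simp⟩, rfl⟩
  refine le_csInf hne ?_
  rintro _ ⟨𝒜, h𝒜, hunb, rfl⟩
  by_contra hfin
  rw [not_le, Cardinal.lt_aleph0_iff_set_finite] at hfin
  exact hunb ⟨⋃₀ 𝒜, isBounded_sUnion hempty hfin h𝒜, fun _ => subset_sUnion_of_mem⟩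

theorem isBounded_iUnion_of_mk_lt_addBorn {ι : Type u} {f : ι → Set X}
    (hf : ∀ i, B.IsBounded (f i)) (hι : Cardinal.mk ι < B.addBorn) :
    B.IsBounded (⋃ i, f i) := by
  by_contra hunb
  refine hι.not_ge ((B.addBorn_le_mk (𝒜 := range f) ?_ ?_).trans Cardinal.mk_range_le)
  · rintro _ ⟨i, rfl⟩
    exact hf i
  · rintro ⟨D, hD, hsub⟩
    exact hunb (hD.subset (iUnion_subset fun i => hsub _ (mem_range_self i)))

def separatingSet {ι : Type*} [LinearOrder ι] (D : ι → Set (X × X)) (A C : Set X) : Set X :=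
  {x | ∃ i, x ∈ img (D i) A ∧ ∀ j ≤ i, x ∉ img (D j) C}

theorem disjoint_separatingSet {ι : Type*} [LinearOrder ι] (D : ι → Set (X × X))
    (A C : Set X) : Disjoint (separatingSet D A C) (separatingSet D C A) := by
  rw [disjoint_left]
  rintro x ⟨i, hxA, hi⟩ ⟨j, hxC, hj⟩
  rcases le_total i j with hij | hji
  · exact hj i hij hxA
  · exact hi j hji hxC

theorem exists_card_eq_cofStarAt (hempty : B.IsBounded ∅) (A : Set X) :
    ∃ 𝒞 ⊆ B.entourages, (∀ E ∈ B.entourages, ∃ C ∈ 𝒞, B.IsBounded (img E A \ img C A)) ∧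
      Cardinal.mk 𝒞 = B.cofStarAt A := by
  obtain ⟨𝒞, h𝒞, hcof, hcard⟩ := csInf_mem (α := Cardinal) (s := {c | ∃ 𝒞 : Set (Set (X × X)),
      𝒞 ⊆ B.entourages ∧ (∀ E ∈ B.entourages, ∃ C ∈ 𝒞, B.IsBounded (img E A \ img C A)) ∧
      c = Cardinal.mk 𝒞}) ⟨_, B.entourages, subset_rfl, fun E hE => ⟨E, hE, by simpa⟩, rfl⟩
  exact ⟨𝒞, h𝒞, hcof, hcard.symm⟩

theorem cofStarAt_ne_zero (hempty : B.IsBounded ∅) (hE : B.entourages.Nonempty)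
    (A : Set X) : B.cofStarAt A ≠ 0 := by
  obtain ⟨𝒞, -, hcof, hcard⟩ := B.exists_card_eq_cofStarAt hempty A
  obtain ⟨E, hE⟩ := hE
  obtain ⟨C, hC, -⟩ := hcof E hE
  rw [← hcard, Ne, Cardinal.mk_set_eq_zero_iff]
  exact Set.nonempty_iff_ne_empty.1 ⟨C, hC⟩

theorem cofStarAt_le_cofStar (A : Set X) : B.cofStarAt A ≤ B.cofStar :=
  le_ciSup Cardinal.bddAbove_of_small A

variable {B}

theorem asympNbhd_separatingSet {ι : Type u} [LinearOrder ι] {D : ι → Set (X × X)}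
    (hD : ∀ i, D i ∈ B.entourages) {A C : Set X} (hAC : B.AsympDisjoint A C)
    (hcof : ∀ E ∈ B.entourages, ∃ i, B.IsBounded (img E A \ img (D i) A))
    (hseg : ∀ i : ι, Cardinal.mk (Iic i) < B.addBorn) :
    B.AsympNbhd A (separatingSet D A C) := by
  intro E hE
  obtain ⟨i, hi⟩ := hcof E hE
  have hmeet : B.IsBounded (⋃ j : Iic i, img (D i) A ∩ img (D j) C) :=
    B.isBounded_iUnion_of_mk_lt_addBorn (fun j => hAC.isBounded_inter_img (hD i) (hD j)) (hseg i)
  refine (hi.union hmeet).subset ?_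
  rintro x ⟨hxE, hxU⟩
  by_cases hxi : x ∈ img (D i) A
  · obtain ⟨j, hji, hxj⟩ : ∃ j ≤ i, x ∈ img (D j) C := by
      by_contra! hnot
      exact hxU ⟨i, hxi, hnot⟩
    exact Or.inr (mem_iUnion.2 ⟨⟨j, hji⟩, hxi, hxj⟩)
  · exact Or.inl ⟨hxE, hxi⟩

theorem exists_disjoint_asympNbhd {A C : Set X} (hAC : B.AsympDisjoint A C)
    (hκ : Cardinal.aleph0 ≤ B.addBorn) {𝒟 : Set (Set (X × X))} (h𝒟 : 𝒟 ⊆ B.entourages)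
    (h𝒟A : ∀ E ∈ B.entourages, ∃ D ∈ 𝒟, B.IsBounded (img E A \ img D A))
    (h𝒟C : ∀ E ∈ B.entourages, ∃ D ∈ 𝒟, B.IsBounded (img E C \ img D C))
    (h𝒟κ : Cardinal.mk 𝒟 ≤ B.addBorn) :
    ∃ U V, B.AsympNbhd A U ∧ B.AsympNbhd C V ∧ Disjoint U V := by
  obtain ⟨e⟩ : Nonempty ((Cardinal.mk 𝒟).ord.ToType ≃ 𝒟) :=
    Cardinal.eq.1 (Cardinal.mk_ord_toType _)
  set D : (Cardinal.mk 𝒟).ord.ToType → Set (X × X) := fun i => e i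
  have hD i : D i ∈ B.entourages := h𝒟 (e i).2
  have hcof {S : Set X} (hS : ∀ E ∈ B.entourages, ∃ D ∈ 𝒟, B.IsBounded (img E S \ img D S))
      (E) (hE : E ∈ B.entourages) : ∃ i, B.IsBounded (img E S \ img (D i) S) := by
    obtain ⟨F, hF, hbdd⟩ := hS E hE
    exact ⟨e.symm ⟨F, hF⟩, by simpa [D] using hbdd⟩
  -- `(#𝒟).ord` is an initial ordinal: its proper initial segments have fewer than `#𝒟` elements
  have hseg (i : (Cardinal.mk 𝒟).ord.ToType) : Cardinal.mk (Iic i) < B.addBorn := by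
    rw [← Iio_insert]
    have hIio : Cardinal.mk (Iio i) < Cardinal.mk 𝒟 := by simpa using Cardinal.mk_Iio_lt i
    exact Cardinal.mk_insert_le.trans_lt <| Cardinal.add_lt_of_lt hκ (hIio.trans_le h𝒟κ)
      (Cardinal.one_lt_aleph0.trans_le hκ)
  exact ⟨_, _, asympNbhd_separatingSet hD hAC (hcof h𝒟A) hseg,
    asympNbhd_separatingSet hD hAC.symm (hcof h𝒟C) hseg, disjoint_separatingSet D A C⟩

end Ballean

/-- a ballean is normal provided `cof⋆(𝓔) ≤ add(B_X)`. -/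
theorem statement0 {X : Type u} (B : Ballean X) (h : B.cofStar ≤ B.addBorn) :
    B.Normal := by
  intro A C hAC
  rcases B.entourages.eq_empty_or_nonempty with hE | hE
  · exact ⟨∅, ∅, by simp [Ballean.AsympNbhd, hE], by simp [Ballean.AsympNbhd, hE],
      disjoint_empty _⟩
  have hempty : B.IsBounded ∅ := (hAC _ hE.some_mem).subset (empty_subset _)
  have hle S : B.cofStarAt S ≤ B.addBorn := (B.cofStarAt_le_cofStar S).trans h
  have hκ : Cardinal.aleph0 ≤ B.addBorn := B.aleph0_le_addBorn
    ((pos_iff_ne_zero.2 (B.cofStarAt_ne_zero hempty hE A)).trans_le (hle A)).ne'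
  obtain ⟨𝒞A, h𝒞A, hcofA, hcardA⟩ := B.exists_card_eq_cofStarAt hempty A
  obtain ⟨𝒞C, h𝒞C, hcofC, hcardC⟩ := B.exists_card_eq_cofStarAt hempty C
  refine B.exists_disjoint_asympNbhd hAC hκ (union_subset h𝒞A h𝒞C)
    (fun E hE => (hcofA E hE).imp fun D hD => ⟨Or.inl hD.1, hD.2⟩)
    (fun E hE => (hcofC E hE).imp fun D hD => ⟨Or.inr hD.1, hD.2⟩) ?_
  calc Cardinal.mk ↥(𝒞A ∪ 𝒞C) ≤ Cardinal.mk 𝒞A + Cardinal.mk 𝒞C := Cardinal.mk_union_le _ _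
    _ ≤ B.addBorn + B.addBorn := add_le_add (hcardA ▸ hle A) (hcardC ▸ hle C)
    _ = B.addBorn := Cardinal.add_eq_self hκ
end

section
/- Let n be a natural number and G ⊆ H be two subgroups of the symmetric group S_n on {0,…,n−1}. If for a ballean X the G-symmetric n-th power [X]^n_G is normal, then the H-symmetric n-th power [X]^n_H is normal, too. -/
universe u v

open Set

/-- The equivalence relation on `X^n` identifying `x` and `y` iff `y = x ∘ g` for some
permutation `g` in the subgroup `G` of `S_n`. -/
def permSetoid {X : Type u} (n : ℕ) (G : Subgroup (Equiv.Perm (Fin n))) :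
    Setoid (Fin n → X) where
  r x y := ∃ g ∈ G, y = x ∘ g
  iseqv := by
    refine ⟨fun x => ⟨1, G.one_mem, ?_⟩, ?_, ?_⟩
    · funext i; simp
    · rintro x y ⟨g, hg, rfl⟩
      exact ⟨g⁻¹, G.inv_mem hg, by funext i; simp⟩
    · rintro x y z ⟨g, hg, rfl⟩ ⟨h, hh, rfl⟩
      exact ⟨g * h, G.mul_mem hg hh, by funext i; simp⟩

/-- The underlying set of the `G`-symmetric `n`-th power `[X]^n_G`. -/
def SymPow (X : Type u) (n : ℕ) (G : Subgroup (Equiv.Perm (Fin n))) : Type u :=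
  Quotient (permSetoid (X := X) n G)

/-- The entourages of the `G`-symmetric `n`-th power `[X]^n_G`. -/
def symEnt {X : Type u} (B : Ballean X) (n : ℕ) (G : Subgroup (Equiv.Perm (Fin n))) :
    Set (Set (SymPow X n G × SymPow X n G)) :=
  {Eh | ∃ E ∈ powEnt B n,
    Eh = {p | ∃ x y : Fin n → X,
      p.1 = Quotient.mk (permSetoid n G) x ∧ p.2 = Quotient.mk (permSetoid n G) y ∧
      (x, y) ∈ E}}

/-!
The quotient map `[X]^n_G → [X]^n_H` is surjective and bornologous. It is proper, because a
point of `X^n` has only finitely many permutations, which therefore form a bounded set. And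
entourages lift along it, because the permutation relating two representatives of a point can be
moved to the other end of an entourage, which stays an entourage once it is made permutation
invariant. For any map with these properties normality passes from source to target: pull two
asymptotically disjoint sets back, separate them upstairs by `U` and `V`, and push forward as
`kernImage π U` and `kernImage π V`.
-/

namespace Ballean

section General

variable {X : Type u}

theorem IsBounded.mono {B : Ballean X} {S T : Set X} (hT : B.IsBounded T) (hST : S ⊆ T) :
    B.IsBounded S :=
  let ⟨E, hE, x, hTE⟩ := hT
  ⟨E, hE, x, hST.trans hTE⟩

variable (B : Ballean X)

theorem exists_entourage_mem (p : X × X) : ∃ E ∈ B.entourages, p ∈ E := by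
  have hp : p ∈ ⋃₀ B.entourages := B.sUnion_eq_univ ▸ Set.mem_univ p
  exact hp

theorem exists_entourage_comp {E F : Set (X × X)} (hE : E ∈ B.entourages)
    (hF : F ∈ B.entourages) :
    ∃ D ∈ B.entourages, ∀ a m b : X, (a, m) ∈ E → (m, b) ∈ F → (a, b) ∈ D := by
  obtain ⟨F', hF', hFF'⟩ := B.comp_inv_sub F hF F hF
  obtain ⟨D, hD, hD'⟩ := B.comp_inv_sub E hE F' hF'
  exact ⟨D, hD, fun a m b ham hmb =>
    hD' ⟨m, ham, hFF' ⟨b, B.diag_mem F hF b, hmb⟩⟩⟩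

theorem exists_entourage_superset_union {E F : Set (X × X)} (hE : E ∈ B.entourages)
    (hF : F ∈ B.entourages) : ∃ D ∈ B.entourages, E ⊆ D ∧ F ⊆ D := by
  obtain ⟨D, hD, hEF⟩ := B.exists_entourage_comp hE hF
  exact ⟨D, hD, fun ⟨a, b⟩ h => hEF a b b h (B.diag_mem F hF b),
    fun ⟨a, b⟩ h => hEF a a b (B.diag_mem E hE a) h⟩

theorem exists_entourage_forall_subset {ι : Type v} [Finite ι] [Nonempty ι]
    {f : ι → Set (X × X)} (hf : ∀ i, f i ∈ B.entourages) :
    ∃ D ∈ B.entourages, ∀ i, f i ⊆ D := by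
  have := Fintype.ofFinite ι
  suffices ∀ s : Finset ι, s.Nonempty → ∃ D ∈ B.entourages, ∀ i ∈ s, f i ⊆ D by
    simpa using this Finset.univ Finset.univ_nonempty
  intro s hs
  induction hs using Finset.Nonempty.cons_induction with
  | singleton i => exact ⟨f i, hf i, by simp⟩
  | cons i s hi hs ih =>
    obtain ⟨D, hD, hsD⟩ := ih
    obtain ⟨D', hD', hiD', hDD'⟩ := B.exists_entourage_superset_union (hf i) hD
    exact ⟨D', hD', by simpa [hiD'] using fun j hj => (hsD j hj).trans hDD'⟩

theorem exists_entourage_forall_mem {ι : Type v} [Finite ι] [Nonempty ι] (p : ι → X × X) :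
    ∃ D ∈ B.entourages, ∀ i, p i ∈ D := by
  choose f hf hpf using fun i => B.exists_entourage_mem (p i)
  obtain ⟨D, hD, hfD⟩ := B.exists_entourage_forall_subset hf
  exact ⟨D, hD, fun i => hfD i (hpf i)⟩

end General

section Maps

variable {Y : Type u} {Z : Type v} (BY : Ballean Y) (BZ : Ballean Z)

def IsBornologous (π : Y → Z) : Prop :=
  ∀ E ∈ BY.entourages, ∃ F ∈ BZ.entourages, ∀ a b, (a, b) ∈ E → (π a, π b) ∈ F

variable {BY BZ} {π : Y → Z}

theorem IsBornologous.isBounded_image (hπ : IsBornologous BY BZ π) {S : Set Y}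
    (hS : BY.IsBounded S) : BZ.IsBounded (π '' S) := by
  obtain ⟨E, hE, y, hSE⟩ := hS
  obtain ⟨F, hF, hEF⟩ := hπ E hE
  exact ⟨F, hF, π y, by rintro _ ⟨a, ha, rfl⟩; exact hEF y a (hSE ha)⟩

theorem IsBornologous.asympDisjoint_preimage (hπ : IsBornologous BY BZ π)
    (hproper : ∀ S, BZ.IsBounded S → BY.IsBounded (π ⁻¹' S)) {A C : Set Z}
    (hAC : BZ.AsympDisjoint A C) : BY.AsympDisjoint (π ⁻¹' A) (π ⁻¹' C) := by
  intro E hE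
  obtain ⟨F, hF, hEF⟩ := hπ E hE
  refine (hproper _ (hAC F hF)).mono ?_
  rintro w ⟨⟨a, ha, haw⟩, ⟨c, hc, hcw⟩⟩
  exact ⟨⟨π a, ha, hEF a w haw⟩, ⟨π c, hc, hEF c w hcw⟩⟩

theorem IsBornologous.asympNbhd_kernImage (hπ : IsBornologous BY BZ π)
    (hlift : ∀ F ∈ BZ.entourages, ∃ E ∈ BY.entourages,
      ∀ a w, (a, π w) ∈ F → ∃ v, π v = a ∧ (v, w) ∈ E)
    {S : Set Z} {U : Set Y} (hU : BY.AsympNbhd (π ⁻¹' S) U) :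
    BZ.AsympNbhd S (kernImage π U) := by
  intro F hF
  obtain ⟨E, hE, hFE⟩ := hlift F hF
  refine (hπ.isBounded_image (hU E hE)).mono ?_
  rintro z ⟨⟨a, ha, haz⟩, hz⟩
  obtain ⟨w, rfl, hwU⟩ : ∃ w, π w = z ∧ w ∉ U := by simpa [kernImage] using hz
  obtain ⟨v, rfl, hvw⟩ := hFE a w haz
  exact ⟨w, ⟨⟨v, ha, hvw⟩, hwU⟩, rfl⟩

theorem Normal.of_surjective (hsurj : Function.Surjective π) (hπ : IsBornologous BY BZ π)
    (hproper : ∀ S, BZ.IsBounded S → BY.IsBounded (π ⁻¹' S))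
    (hlift : ∀ F ∈ BZ.entourages, ∃ E ∈ BY.entourages,
      ∀ a w, (a, π w) ∈ F → ∃ v, π v = a ∧ (v, w) ∈ E)
    (hnormal : BY.Normal) : BZ.Normal := by
  intro A C hAC
  obtain ⟨U, V, hU, hV, hUV⟩ := hnormal _ _ (hπ.asympDisjoint_preimage hproper hAC)
  refine ⟨kernImage π U, kernImage π V, hπ.asympNbhd_kernImage hlift hU,
    hπ.asympNbhd_kernImage hlift hV, Set.disjoint_left.mpr fun z hzU hzV => ?_⟩
  obtain ⟨w, rfl⟩ := hsurj z
  exact Set.disjoint_left.mp hUV (hzU rfl) (hzV rfl)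

end Maps

end Ballean

section Power

variable {X : Type u} {n : ℕ} (B : Ballean X)

theorem exists_powEnt_comp {E F : Set ((Fin n → X) × (Fin n → X))} (hE : E ∈ powEnt B n)
    (hF : F ∈ powEnt B n) :
    ∃ D ∈ powEnt B n, ∀ x y z, (x, y) ∈ E → (y, z) ∈ F → (x, z) ∈ D := by
  obtain ⟨E, hE, rfl⟩ := hE
  obtain ⟨F, hF, rfl⟩ := hF
  choose D hD hEFD using fun i => B.exists_entourage_comp (hE i) (hF i)
  exact ⟨_, ⟨D, hD, rfl⟩, fun x y z hxy hyz i => hEFD i _ _ _ (hxy i) (hyz i)⟩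

theorem exists_powEnt_perm_invariant {E : Set ((Fin n → X) × (Fin n → X))}
    (hE : E ∈ powEnt B n) :
    ∃ E' ∈ powEnt B n, ∀ σ : Equiv.Perm (Fin n), ∀ x y, (x, y) ∈ E → (x ∘ σ, y ∘ σ) ∈ E' := by
  obtain ⟨F, hF, rfl⟩ := hE
  have hD : ∀ j : Fin n, ∃ D ∈ B.entourages, ∀ k, F k ⊆ D := fun j =>
    have : Nonempty (Fin n) := ⟨j⟩
    B.exists_entourage_forall_subset hF
  choose D hD hFD using hD
  exact ⟨_, ⟨D, hD, rfl⟩, fun σ x y hxy j => hFD j (σ j) (hxy (σ j))⟩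

theorem exists_powEnt_orbit (c : Fin n → X) :
    ∃ D ∈ powEnt B n, ∀ σ : Equiv.Perm (Fin n), (c, c ∘ σ) ∈ D := by
  choose D hD hcD using fun j => B.exists_entourage_forall_mem fun σ : Equiv.Perm (Fin n) =>
    (c j, c (σ j))
  exact ⟨_, ⟨D, hD, rfl⟩, fun σ j => hcD j σ⟩

end Power

section SymmetricPower

variable {X : Type u} {n : ℕ}

def symEntOf (K : Subgroup (Equiv.Perm (Fin n))) (E : Set ((Fin n → X) × (Fin n → X))) :
    Set (SymPow X n K × SymPow X n K) :=
  {p | ∃ x y : Fin n → X, p.1 = Quotient.mk (permSetoid n K) x ∧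
    p.2 = Quotient.mk (permSetoid n K) y ∧ (x, y) ∈ E}

def symMap {G H : Subgroup (Equiv.Perm (Fin n))} (hGH : G ≤ H) :
    SymPow X n G → SymPow X n H :=
  Quotient.lift (Quotient.mk (permSetoid n H)) fun _ _ ⟨g, hg, h⟩ =>
    Quotient.sound ⟨g, hGH hg, h⟩

variable {B : Ballean X} {G H : Subgroup (Equiv.Perm (Fin n))} (hGH : G ≤ H)
  {QG : Ballean (SymPow X n G)} {QH : Ballean (SymPow X n H)}

theorem symMap_surjective : Function.Surjective (symMap (X := X) hGH) :=
  fun z => Quotient.inductionOn z fun x => ⟨Quotient.mk _ x, rfl⟩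

theorem symMap_isBornologous (hQG : QG.entourages = symEnt B n G)
    (hQH : QH.entourages = symEnt B n H) : QG.IsBornologous QH (symMap hGH) := by
  rw [Ballean.IsBornologous, hQG, hQH]
  rintro _ ⟨E, hE, rfl⟩
  exact ⟨symEntOf H E, ⟨E, hE, rfl⟩, fun a b ⟨x, y, hx, hy, hxy⟩ =>
    ⟨x, y, congrArg (symMap hGH) hx, congrArg (symMap hGH) hy, hxy⟩⟩

theorem isBounded_preimage_symMap (hQG : QG.entourages = symEnt B n G)
    (hQH : QH.entourages = symEnt B n H) {S : Set (SymPow X n H)} (hS : QH.IsBounded S) :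
    QG.IsBounded (symMap hGH ⁻¹' S) := by
  obtain ⟨_, hF, z, hSF⟩ := hS
  rw [hQH] at hF
  obtain ⟨E, hE, rfl⟩ := hF
  obtain ⟨c, rfl⟩ := Quotient.exists_rep z
  obtain ⟨E', hE', hEE'⟩ := exists_powEnt_perm_invariant B hE
  obtain ⟨D, hD, hcD⟩ := exists_powEnt_orbit B c
  obtain ⟨K, hK, hDE'K⟩ := exists_powEnt_comp B hD hE'
  refine ⟨symEntOf G K, hQG ▸ ⟨K, hK, rfl⟩, Quotient.mk _ c, fun w hw => ?_⟩
  induction w using Quotient.inductionOn with | h y => ?_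
  obtain ⟨x', y', hx', hy', hxy'⟩ := hSF hw
  obtain ⟨g, -, rfl⟩ : ∃ g ∈ H, x' = c ∘ g := Quotient.exact hx'
  obtain ⟨h, -, rfl⟩ : ∃ h ∈ H, y' = y ∘ h := Quotient.exact hy'
  refine ⟨c, y, rfl, rfl, hDE'K _ (c ∘ ⇑(g * h⁻¹)) _ (hcD _) ?_⟩
  simpa [Function.comp_assoc] using hEE' h⁻¹ _ _ hxy'

theorem exists_lift_symMap (hQG : QG.entourages = symEnt B n G)
    (hQH : QH.entourages = symEnt B n H) :
    ∀ F ∈ QH.entourages, ∃ E ∈ QG.entourages,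
      ∀ a w, (a, symMap hGH w) ∈ F → ∃ v, symMap hGH v = a ∧ (v, w) ∈ E := by
  rw [hQG, hQH]
  rintro _ ⟨E, hE, rfl⟩
  obtain ⟨E', hE', hEE'⟩ := exists_powEnt_perm_invariant B hE
  refine ⟨symEntOf G E', ⟨E', hE', rfl⟩, fun a w haw => ?_⟩
  induction w using Quotient.inductionOn with | h y' => ?_
  obtain ⟨x, y, hx, hy, hxy⟩ := haw
  obtain ⟨h, hh, rfl⟩ : ∃ h ∈ H, y = y' ∘ h := Quotient.exact hy
  refine ⟨Quotient.mk _ (x ∘ ⇑h⁻¹), ?_, _, _, rfl, rfl, ?_⟩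
  · exact (Quotient.sound (s := permSetoid n H) ⟨h, hh, by ext; simp⟩).trans hx.symm
  · simpa [Function.comp_assoc] using hEE' h⁻¹ _ _ hxy

end SymmetricPower

/-- STATEMENT 7: if `G ⊆ H` are subgroups of `S_n` and the `G`-symmetric `n`-th power
`[X]^n_G` of a ballean `X` is normal, then the `H`-symmetric `n`-th power `[X]^n_H` is
normal, too. -/
theorem statement7 {X : Type u} (B : Ballean X) {n : ℕ}
    (G H : Subgroup (Equiv.Perm (Fin n))) (hGH : G ≤ H)
    (QG : Ballean (SymPow X n G)) (hQG : QG.entourages = symEnt B n G)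
    (QH : Ballean (SymPow X n H)) (hQH : QH.entourages = symEnt B n H)
    (hnorm : QG.Normal) :
    QH.Normal :=
  hnorm.of_surjective (symMap_surjective hGH) (symMap_isBornologous hGH hQG hQH)
    (fun _ => isBounded_preimage_symMap hGH hQG hQH) (exists_lift_symMap hGH hQG hQH)
end

section
/- For any group G and any infinite cardinal κ with κ < |G|, the ballean (G, 𝓔_{[G]^{<κ}}) is not normal. -/
/-!
Index rows by `κ⁺` and columns by `κ`, and choose by transfinite recursion elements of `G`,
each outside the subgroup generated by the earlier ones (possible as `|G| > κ`): first column
shifts `j_δ`, then for each row `γ` a row shift `i_γ` followed by the points `p_{γδ}`. Put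
`A = {i_γ⁻¹ p_{γδ}}` and `B = {j_δ⁻¹ p_{γδ}}`. Row `γ` lies in `i_γ A` and column `δ` in `j_δ B`,
so an asymptotic neighbourhood `U` of `A` meets every row, while an asymptotic neighbourhood of
`B` misses fewer than `κ` points of each column: at most `κ` points in all, too few to contain a
point of `U` from each of the `κ⁺` rows. On the other hand `(a, b) ↦ a b⁻¹` is at most two-to-one
on `A × B`, because the newest generator occurring in `a b⁻¹` can only cancel against the same
generator in another such quotient; hence `|xA ∩ yB| ≤ 2` and `A`, `B` are asymptotically
disjoint.
-/

universe u

open Set Pointwise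

/-- For the ballean `(G, 𝓔_{[G]^{<κ}})`, sets `A, B ⊆ G` are asymptotically disjoint:
for every `I` of cardinality `< κ` the set `(A ∪ IA) ∩ (B ∪ IB)` has cardinality `< κ`. -/
def GrpAsympDisjoint {G : Type u} [Group G] (κ : Cardinal.{u}) (A B : Set G) : Prop :=
  ∀ I : Set G, Cardinal.mk ↥I < κ →
    Cardinal.mk ↥((A ∪ I * A) ∩ (B ∪ I * B)) < κ

/-- `U` is an asymptotic neighborhood of `A` in `(G, 𝓔_{[G]^{<κ}})`: for every `I` of
cardinality `< κ` the set `(A ∪ IA) \ U` has cardinality `< κ`. -/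
def GrpAsympNbhd {G : Type u} [Group G] (κ : Cardinal.{u}) (A U : Set G) : Prop :=
  ∀ I : Set G, Cardinal.mk ↥I < κ → Cardinal.mk ↥((A ∪ I * A) \ U) < κ

/-- Normality of the ballean `(G, 𝓔_{[G]^{<κ}})`. -/
def GrpNormal (G : Type u) [Group G] (κ : Cardinal.{u}) : Prop :=
  ∀ A B : Set G, GrpAsympDisjoint κ A B →
    ∃ U V : Set G, GrpAsympNbhd κ A U ∧ GrpAsympNbhd κ B V ∧ Disjoint U V

open Cardinal Function

lemma Subgroup.cardinalMk_closure_le_max {G : Type u} [Group G] (S : Set G) :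
    #(closure S : Set G) ≤ max #S ℵ₀ := by
  rcases S.eq_empty_or_nonempty with rfl | hS
  · rw [closure_empty, coe_bot, mk_singleton]
    exact le_max_of_le_right one_le_aleph0
  · have : Nonempty S := hS.to_subtype
    have hrange : (closure S : Set G) = range (FreeGroup.lift ((↑) : S → G)) := by
      rw [← MonoidHom.coe_range, FreeGroup.range_lift_eq_closure, Subtype.range_val]
    rw [hrange]
    exact mk_range_le.trans_eq (mk_freeGroup S)

lemma mk_Iio_withBot_le {α : Type u} [Preorder α] {κ : Cardinal.{u}} (hκ : ℵ₀ ≤ κ)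
    (h : ∀ a : α, #(Iio a) ≤ κ) (x : WithBot α) : #(Iio x) ≤ κ := by
  induction x with
  | bot => simp
  | coe a =>
    rw [WithBot.Iio_coe]
    refine (mk_union_le _ _).trans ?_
    rw [mk_singleton]
    exact add_le_of_le hκ (mk_image_le.trans (h a)) (one_le_aleph0.trans hκ)

lemma mk_Iio_lex_le {α β : Type u} [PartialOrder α] [Preorder β] {κ : Cardinal.{u}}
    (hκ : ℵ₀ ≤ κ) (hα : ∀ a : α, #(Iio a) ≤ κ) (hβ : #β ≤ κ) (t : α ×ₗ β) :
    #(Iio t) ≤ κ := by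
  have hsub : Iio t ⊆ ofLex ⁻¹' (Iic (ofLex t).1 ×ˢ Set.univ) := fun s hs =>
    ⟨Prod.Lex.monotone_fst s t (le_of_lt hs), trivial⟩
  calc #(Iio t) ≤ #(Iic (ofLex t).1 ×ˢ (Set.univ : Set β)) :=
        (mk_le_mk_of_subset hsub).trans_eq (mk_preimage_equiv ofLex _)
    _ = #(Iic (ofLex t).1) * #β := by
        rw [mk_congr (Equiv.Set.prod _ _), mk_prod, mk_univ, lift_id, lift_id]
    _ ≤ κ * κ := by
        refine mul_le_mul' ?_ hβ
        rw [← Iio_insert]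
        exact mk_insert_le.trans (add_le_of_le hκ (hα _) (one_le_aleph0.trans hκ))
    _ = κ := mul_eq_self hκ

lemma eq_of_apply_eq_of_notMem_of_mem {α β T : Type*} [LinearOrder T] {H : T → Set β}
    {f : α → β} {τ : α → T} (hnot : ∀ a, f a ∉ H (τ a)) (hmem : ∀ a t, τ a < t → f a ∈ H t)
    {a b : α} (h : f a = f b) : τ a = τ b := by
  by_contra hne
  rcases lt_or_gt_of_ne hne with hab | hba
  · exact hnot b (h ▸ hmem a _ hab)
  · exact hnot a (h ▸ hmem b _ hba)

def closureBefore {G T : Type*} [Group G] [Preorder T] (g : T → G) (t : T) : Subgroup G :=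
  Subgroup.closure (g '' Iio t)

def IsGenericFamily {G T : Type*} [Group G] [Preorder T] (g : T → G) : Prop :=
  ∀ t, g t ∉ closureBefore g t

lemma apply_mem_closureBefore {G T : Type*} [Group G] [Preorder T] (g : T → G) {s t : T}
    (h : s < t) : g s ∈ closureBefore g t :=
  Subgroup.subset_closure (mem_image_of_mem g h)

lemma IsGenericFamily.injective {G T : Type*} [Group G] [LinearOrder T] {g : T → G}
    (hg : IsGenericFamily g) : Injective g := fun _ _ h =>
  eq_of_apply_eq_of_notMem_of_mem (H := fun t => closureBefore g t) (τ := id) (fun t => hg t)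
    (fun _ _ => apply_mem_closureBefore g) h

theorem exists_isGenericFamily {G T : Type u} [Group G] [LinearOrder T] [WellFoundedLT T]
    {κ : Cardinal.{u}} (hκ : ℵ₀ ≤ κ) (hκG : κ < #G) (hT : ∀ t : T, #(Iio t) ≤ κ) :
    ∃ g : T → G, IsGenericFamily g := by
  have hproper : ∀ S : Set G, #S ≤ κ → ∃ x, x ∉ Subgroup.closure S := fun S hS => by
    by_contra! hall
    have hGS : #G ≤ #(Subgroup.closure S : Set G) :=
      mk_le_of_injective (f := fun x => (⟨x, hall x⟩ : (Subgroup.closure S : Set G)))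
        fun _ _ h => congrArg Subtype.val h
    exact (hGS.trans ((Subgroup.cardinalMk_closure_le_max S).trans (max_le hS hκ))).not_gt hκG
  let g : T → G := wellFounded_lt.fix fun t rec =>
    Classical.epsilon fun x => x ∉ Subgroup.closure (range fun s : Iio t => rec s s.2)
  refine ⟨g, fun t => ?_⟩
  have hg : g t = Classical.epsilon fun x => x ∉ closureBefore g t := by
    rw [closureBefore, image_eq_range]
    exact wellFounded_lt.fix_eq _ t
  rw [hg]
  exact Classical.epsilon_spec (hproper _ (mk_image_le.trans (hT t)))

namespace GenericGrid

variable {R C : Type*}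

def pointTime (q : R × C) : WithBot R ×ₗ WithBot C := toLex ((q.1 : WithBot R), (q.2 : WithBot C))

def rowTime (γ : R) : WithBot R ×ₗ WithBot C := toLex ((γ : WithBot R), ⊥)

def colTime (δ : C) : WithBot R ×ₗ WithBot C := toLex (⊥, (δ : WithBot C))

lemma pointTime_injective : Injective (pointTime (R := R) (C := C)) := by
  intro q q' h
  simpa [pointTime, Prod.ext_iff] using h

lemma rowTime_injective : Injective (rowTime (R := R) (C := C)) := by
  intro γ γ' h
  simpa [rowTime] using h

lemma colTime_injective : Injective (colTime (R := R) (C := C)) := by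
  intro δ δ' h
  simpa [colTime] using h

lemma rowTime_ne_pointTime (γ : R) (q : R × C) : rowTime γ ≠ pointTime q := by
  simp [rowTime, pointTime]

variable {G : Type*} [Group G] (g : WithBot R ×ₗ WithBot C → G)

def rowPt (q : R × C) : G := (g (rowTime q.1))⁻¹ * g (pointTime q)

def colPt (q : R × C) : G := (g (colTime q.2))⁻¹ * g (pointTime q)

def cross (P : (R × C) × (R × C)) : G := rowPt g P.1 * (colPt g P.2)⁻¹

lemma cross_self (q : R × C) : cross g (q, q) = (g (rowTime q.1))⁻¹ * g (colTime q.2) := by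
  simp only [cross, rowPt, colPt]
  group

variable [LinearOrder R] [LinearOrder C]

lemma colTime_lt_rowTime (δ : C) (γ : R) : colTime δ < rowTime γ := by
  simp [colTime, rowTime, Prod.Lex.toLex_lt_toLex]

lemma rowTime_lt_pointTime (q : R × C) : rowTime q.1 < pointTime q := by
  simp [rowTime, pointTime, Prod.Lex.toLex_lt_toLex]

lemma colTime_lt_pointTime (δ : C) (q : R × C) : colTime δ < pointTime q :=
  (colTime_lt_rowTime δ q.1).trans (rowTime_lt_pointTime q)

/-- The time of the newest generator occurring in `cross g P`. -/
def crossTime (P : (R × C) × (R × C)) : WithBot R ×ₗ WithBot C :=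
  if P.1 = P.2 then rowTime P.1.1 else max (pointTime P.1) (pointTime P.2)

lemma rowPt_mem {q : R × C} {t} (h : pointTime q < t) : rowPt g q ∈ closureBefore g t :=
  mul_mem (inv_mem (apply_mem_closureBefore g ((rowTime_lt_pointTime q).trans h)))
    (apply_mem_closureBefore g h)

lemma colPt_mem {q : R × C} {t} (h : pointTime q < t) : colPt g q ∈ closureBefore g t :=
  mul_mem (inv_mem (apply_mem_closureBefore g ((colTime_lt_pointTime q.2 q).trans h)))
    (apply_mem_closureBefore g h)

lemma cross_mem {P : (R × C) × (R × C)} {t} (h : crossTime P < t) :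
    cross g P ∈ closureBefore g t := by
  obtain ⟨q, r⟩ := P
  by_cases hqr : q = r
  · subst hqr
    rw [crossTime, if_pos rfl] at h
    rw [cross_self]
    exact mul_mem (inv_mem (apply_mem_closureBefore g h))
      (apply_mem_closureBefore g ((colTime_lt_rowTime _ _).trans h))
  · rw [crossTime, if_neg hqr, max_lt_iff] at h
    exact mul_mem (rowPt_mem g h.1) (inv_mem (colPt_mem g h.2))

variable {g} (hg : IsGenericFamily g)
include hg

lemma rowPt_notMem (q : R × C) : rowPt g q ∉ closureBefore g (pointTime q) := by
  rw [rowPt, Subgroup.mul_mem_cancel_left _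
    (inv_mem (apply_mem_closureBefore g (rowTime_lt_pointTime q)))]
  exact hg _

lemma colPt_notMem (q : R × C) : colPt g q ∉ closureBefore g (pointTime q) := by
  rw [colPt, Subgroup.mul_mem_cancel_left _
    (inv_mem (apply_mem_closureBefore g (colTime_lt_pointTime q.2 q)))]
  exact hg _

lemma cross_notMem (P : (R × C) × (R × C)) : cross g P ∉ closureBefore g (crossTime P) := by
  obtain ⟨q, r⟩ := P
  by_cases hqr : q = r
  · subst hqr
    rw [crossTime, if_pos rfl, cross_self, Subgroup.mul_mem_cancel_right _
      (apply_mem_closureBefore g (colTime_lt_rowTime _ _)), inv_mem_iff]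
    exact hg _
  · rw [crossTime, if_neg hqr]
    rcases lt_or_gt_of_ne (pointTime_injective.ne hqr) with hlt | hlt
    · rw [max_eq_right hlt.le, cross, Subgroup.mul_mem_cancel_left _ (rowPt_mem g hlt),
        inv_mem_iff]
      exact colPt_notMem hg r
    · rw [max_eq_left hlt.le, cross, Subgroup.mul_mem_cancel_right _
        (inv_mem (colPt_mem g hlt))]
      exact rowPt_notMem hg q

lemma rowPt_injective : Injective (rowPt g) := fun _ _ h =>
  pointTime_injective (eq_of_apply_eq_of_notMem_of_mem (H := fun t => closureBefore g t)
    (rowPt_notMem hg) (fun _ _ => rowPt_mem g) h)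

lemma colPt_injective : Injective (colPt g) := fun _ _ h =>
  pointTime_injective (eq_of_apply_eq_of_notMem_of_mem (H := fun t => closureBefore g t)
    (colPt_notMem hg) (fun _ _ => colPt_mem g) h)

lemma crossTime_eq_of_cross_eq {P P' : (R × C) × (R × C)} (h : cross g P = cross g P') :
    crossTime P = crossTime P' :=
  eq_of_apply_eq_of_notMem_of_mem (H := fun t => closureBefore g t)
    (cross_notMem hg) (fun _ _ => cross_mem g) h

lemma snd_eq_of_cross_eq_of_fst_eq {P P' : (R × C) × (R × C)} (h : cross g P = cross g P')
    (h₁ : P.1 = P'.1) : P.2 = P'.2 := by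
  rw [cross, cross, h₁] at h
  exact colPt_injective hg (inv_injective (mul_left_cancel h))

lemma fst_eq_of_cross_eq_of_snd_eq {P P' : (R × C) × (R × C)} (h : cross g P = cross g P')
    (h₂ : P.2 = P'.2) : P.1 = P'.1 := by
  rw [cross, cross, h₂] at h
  exact rowPt_injective hg (mul_right_cancel h)

lemma eq_of_cross_self_eq {q : R × C} {P : (R × C) × (R × C)} (h : cross g (q, q) = cross g P) :
    P = (q, q) := by
  have hτ := crossTime_eq_of_cross_eq hg h
  rw [crossTime, if_pos rfl] at hτ
  obtain ⟨r, r'⟩ := P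
  by_cases hr : r = r'
  · subst hr
    rw [crossTime, if_pos rfl] at hτ
    have hrow : q.1 = r.1 := rowTime_injective hτ
    rw [cross_self, cross_self, hrow] at h
    rw [Prod.ext hrow (colTime_injective (hg.injective (mul_left_cancel h)))]
  · rw [crossTime, if_neg hr] at hτ
    rcases max_choice (pointTime r) (pointTime r') with hmax | hmax <;>
      exact absurd (hτ.trans hmax) (rowTime_ne_pointTime _ _)

lemma fst_ne_snd_of_cross_eq {P P' : (R × C) × (R × C)} (h : cross g P = cross g P')
    (hne : P ≠ P') : P.1 ≠ P.2 := by
  intro hP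
  obtain ⟨q, r⟩ := P
  dsimp only at hP
  subst hP
  exact hne (eq_of_cross_self_eq hg h).symm

lemma newer_mem_opposite_of_cross_eq {P P' : (R × C) × (R × C)} (h : cross g P = cross g P')
    (hne : P ≠ P') :
    pointTime P.2 < pointTime P.1 ∧ P'.2 = P.1 ∨ pointTime P.1 < pointTime P.2 ∧ P'.1 = P.2 := by
  have hτ := crossTime_eq_of_cross_eq hg h
  rw [crossTime, crossTime, if_neg (fst_ne_snd_of_cross_eq hg h hne),
    if_neg (fst_ne_snd_of_cross_eq hg h.symm hne.symm)] at hτ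
  have hmax : ∀ p, pointTime p = max (pointTime P'.1) (pointTime P'.2) → p = P'.1 ∨ p = P'.2 :=
    fun p hp => (max_choice _ _).imp (fun e => pointTime_injective (hp.trans e))
      (fun e => pointTime_injective (hp.trans e))
  rcases lt_or_gt_of_ne (pointTime_injective.ne (fst_ne_snd_of_cross_eq hg h hne)) with hlt | hlt
  · rw [max_eq_right hlt.le] at hτ
    refine Or.inr ⟨hlt, ((hmax _ hτ).resolve_right fun e => hne ?_).symm⟩
    exact Prod.ext (fst_eq_of_cross_eq_of_snd_eq hg h e) e
  · rw [max_eq_left hlt.le] at hτ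
    refine Or.inl ⟨hlt, ((hmax _ hτ).resolve_left fun e => hne ?_).symm⟩
    exact Prod.ext e (snd_eq_of_cross_eq_of_fst_eq hg h e)

lemma subsingleton_cross_eq_diff (P : (R × C) × (R × C)) :
    ({P' | cross g P' = cross g P} \ {P}).Subsingleton := by
  rintro P₁ ⟨h₁, hne₁⟩ P₂ ⟨h₂, hne₂⟩
  have h₁₂ : cross g P₁ = cross g P₂ := h₁.trans h₂.symm
  rcases newer_mem_opposite_of_cross_eq hg h₁.symm (Ne.symm hne₁) with ⟨hlt, e₁⟩ | ⟨hlt, e₁⟩ <;>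
    rcases newer_mem_opposite_of_cross_eq hg h₂.symm (Ne.symm hne₂) with ⟨hlt', e₂⟩ | ⟨hlt', e₂⟩
  · have e := e₁.trans e₂.symm
    exact Prod.ext (fst_eq_of_cross_eq_of_snd_eq hg h₁₂ e) e
  · exact absurd hlt hlt'.asymm
  · exact absurd hlt hlt'.asymm
  · have e := e₁.trans e₂.symm
    exact Prod.ext e (snd_eq_of_cross_eq_of_fst_eq hg h₁₂ e)

lemma subsingleton_smul_inter_smul_diff (x y : G) {s : G}
    (hs : s ∈ x • range (rowPt g) ∩ y • range (colPt g)) :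
    ((x • range (rowPt g) ∩ y • range (colPt g)) \ {s}).Subsingleton := by
  have hpair : ∀ s ∈ x • range (rowPt g) ∩ y • range (colPt g),
      ∃ P, cross g P = x⁻¹ * y ∧ s = x * rowPt g P.1 := by
    rintro _ ⟨⟨_, ⟨q, rfl⟩, rfl⟩, ⟨_, ⟨r, rfl⟩, hqr⟩⟩
    refine ⟨(q, r), ?_, rfl⟩
    simp only [smul_eq_mul] at hqr
    have hq : rowPt g q = x⁻¹ * (y * colPt g r) := by rw [hqr]; group
    rw [cross, hq]
    group
  obtain ⟨P, hP, rfl⟩ := hpair s hs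
  rintro _ ⟨hs₁, hne₁⟩ _ ⟨hs₂, hne₂⟩
  obtain ⟨P₁, hP₁, rfl⟩ := hpair _ hs₁
  obtain ⟨P₂, hP₂, rfl⟩ := hpair _ hs₂
  have hne : ∀ {P'}, x * rowPt g P'.1 ∉ ({x * rowPt g P.1} : Set G) → P' ≠ P := by
    rintro P' hP' rfl
    exact hP' rfl
  rw [subsingleton_cross_eq_diff hg P ⟨hP₁.trans hP.symm, hne hne₁⟩ ⟨hP₂.trans hP.symm, hne hne₂⟩]

end GenericGrid

lemma mk_le_two_of_subsingleton_diff {α : Type u} {S : Set α}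
    (h : ∀ a ∈ S, (S \ {a}).Subsingleton) : #S ≤ 2 := by
  rcases S.eq_empty_or_nonempty with rfl | ⟨a, ha⟩
  · simp
  · calc #S = #↑(insert a (S \ {a})) := by rw [insert_sdiff_singleton, insert_eq_of_mem ha]
      _ ≤ #↑(S \ {a}) + 1 := mk_insert_le
      _ ≤ 1 + 1 := add_le_add (mk_le_one_iff_set_subsingleton.mpr (h a ha)) le_rfl
      _ = 2 := one_add_one_eq_two

theorem grpAsympDisjoint_of_mk_smul_inter_le {G : Type u} [Group G] {κ : Cardinal.{u}}
    (hκ : ℵ₀ ≤ κ) {A B : Set G} (n : ℕ) (h : ∀ x y : G, #(x • A ∩ y • B : Set G) ≤ n) :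
    GrpAsympDisjoint κ A B := by
  intro I hI
  set K : Set G := insert 1 I
  have hK : #K < κ := mk_insert_le.trans_lt (add_lt_of_lt hκ hI (one_lt_aleph0.trans_le hκ))
  have hcover : ∀ D : Set G, ∀ z ∈ D ∪ I * D, ∃ k ∈ K, z ∈ k • D := by
    rintro D z (hz | ⟨i, hi, d, hd, rfl⟩)
    · exact ⟨1, mem_insert 1 I, by rwa [one_smul]⟩
    · exact ⟨i, mem_insert_of_mem 1 hi, smul_mem_smul_set hd⟩
  have hsub : (A ∪ I * A) ∩ (B ∪ I * B) ⊆ ⋃ k : K × K, (k.1 : G) • A ∩ (k.2 : G) • B := by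
    rintro z ⟨hzA, hzB⟩
    obtain ⟨k₁, hk₁, hz₁⟩ := hcover A z hzA
    obtain ⟨k₂, hk₂, hz₂⟩ := hcover B z hzB
    exact mem_iUnion.mpr ⟨(⟨k₁, hk₁⟩, ⟨k₂, hk₂⟩), hz₁, hz₂⟩
  calc #((A ∪ I * A) ∩ (B ∪ I * B) : Set G)
      ≤ #(K × K) * ⨆ k : K × K, #((k.1 : G) • A ∩ (k.2 : G) • B : Set G) :=
        (mk_le_mk_of_subset hsub).trans (mk_iUnion_le _)
    _ ≤ #K * #K * n := by
        rw [mk_prod, lift_id]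
        exact mul_le_mul' le_rfl (ciSup_le' fun k => h _ _)
    _ < κ := mul_lt_of_lt hκ (mul_lt_of_lt hκ hK hK) (natCast_lt_aleph0.trans_le hκ)

theorem not_grpNormal_of_grid {G R C : Type u} [Group G] {κ : Cardinal.{u}} (hκ : ℵ₀ ≤ κ)
    (hR : κ < #R) (hC : #C = κ) {A B : Set G} (hAB : GrpAsympDisjoint κ A B)
    (p : R × C → G) (hp : Injective p) (i : R → G) (j : C → G)
    (hpA : ∀ q, p q ∈ i q.1 • A) (hpB : ∀ q, p q ∈ j q.2 • B) : ¬ GrpNormal G κ := by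
  intro hN
  obtain ⟨U, V, hU, hV, hUV⟩ := hN A B hAB
  have hsingle : ∀ x : G, #({x} : Set G) < κ := fun x => by
    rw [mk_singleton]
    exact one_lt_aleph0.trans_le hκ
  have hmem : ∀ {D : Set G} {x z : G}, z ∈ x • D → z ∈ D ∪ {x} * D := by
    rintro D x z ⟨d, hd, rfl⟩
    exact Or.inr ⟨x, rfl, d, hd, rfl⟩
  have hrow : ∀ γ, ∃ δ, p (γ, δ) ∈ U := by
    intro γ
    by_contra! hγ
    have hsub : range (fun δ => p (γ, δ)) ⊆ (A ∪ {i γ} * A) \ U := by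
      rintro _ ⟨δ, rfl⟩
      exact ⟨hmem (hpA (γ, δ)), hγ δ⟩
    have hinj : Injective fun δ => p (γ, δ) := fun δ δ' h => congrArg Prod.snd (hp h)
    refine (hU {i γ} (hsingle _)).not_ge ?_
    rw [← hC, ← mk_range_eq _ hinj]
    exact mk_le_mk_of_subset hsub
  choose δ hδ using hrow
  set M := ⋃ d : C, range (fun γ => p (γ, d)) \ V
  have hM : #M ≤ κ := by
    refine (mk_iUnion_le _).trans ((mul_le_mul' hC.le (ciSup_le' fun d =>
      (lt_of_le_of_lt ?_ (hV {j d} (hsingle _))).le)).trans (mul_eq_self hκ).le)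
    refine mk_le_mk_of_subset ?_
    rintro _ ⟨⟨γ, rfl⟩, hγ⟩
    exact ⟨hmem (hpB (γ, d)), hγ⟩
  have hinj : Injective fun γ => (⟨p (γ, δ γ), mem_iUnion.mpr
      ⟨δ γ, ⟨γ, rfl⟩, disjoint_left.mp hUV (hδ γ)⟩⟩ : M) :=
    fun γ γ' h => congrArg Prod.fst (hp (congrArg Subtype.val h))
  exact ((mk_le_of_injective hinj).trans hM).not_gt hR

theorem not_grpNormal_of_isGenericFamily {G R C : Type u} [Group G] [LinearOrder R]
    [LinearOrder C] {κ : Cardinal.{u}} (hκ : ℵ₀ ≤ κ) (hR : κ < #R) (hC : #C = κ)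
    {g : WithBot R ×ₗ WithBot C → G} (hg : IsGenericFamily g) : ¬ GrpNormal G κ := by
  open GenericGrid in
  exact not_grpNormal_of_grid hκ hR hC (A := range (rowPt g)) (B := range (colPt g))
    (grpAsympDisjoint_of_mk_smul_inter_le hκ 2 fun x y =>
      mk_le_two_of_subsingleton_diff fun _ hs => subsingleton_smul_inter_smul_diff hg x y hs)
    (g ∘ pointTime) (hg.injective.comp pointTime_injective) (fun γ => g (rowTime γ))
    (fun δ => g (colTime δ)) (fun q => ⟨rowPt g q, ⟨q, rfl⟩, mul_inv_cancel_left _ _⟩)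
    (fun q => ⟨colPt g q, ⟨q, rfl⟩, mul_inv_cancel_left _ _⟩)

/-- STATEMENT 9: for any group `G` and any infinite cardinal `κ < |G|`, the ballean
`(G, 𝓔_{[G]^{<κ}})` is not normal. -/
theorem statement9 {G : Type u} [Group G] (κ : Cardinal.{u})
    (hκ : Cardinal.aleph0 ≤ κ) (hlt : κ < Cardinal.mk G) :
    ¬ GrpNormal G κ := by
  let R := (Order.succ κ).ord.ToType
  let C := κ.ord.ToType
  have hR : #R = Order.succ κ := mk_ord_toType _
  have hC : #C = κ := mk_ord_toType κ
  have hIioR (γ : R) : #(Iio γ) ≤ κ :=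
    Order.lt_succ_iff.mp ((mk_Iio_lt γ (by rw [hR, Ordinal.type_toType])).trans_eq hR)
  have hIio : ∀ t : WithBot R ×ₗ WithBot C, #(Iio t) ≤ κ :=
    mk_Iio_lex_le hκ (mk_Iio_withBot_le hκ hIioR)
      (mk_option.trans_le (add_le_of_le hκ hC.le (one_le_aleph0.trans hκ)))
  obtain ⟨g, hg⟩ := exists_isGenericFamily hκ hlt hIio
  exact not_grpNormal_of_isGenericFamily hκ (hR ▸ Order.lt_succ κ) hC hg
end

section
/- A ballean X is normal if there exists an asymptotic immersion f : X → Y into a normal ballean Y, i.e., a proper macro-uniform map f such that for any asymptotically disjoint sets A, B in X their images f(A) and f(B) are asymptotically disjoint in Y. -/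
universe u v

open Set

namespace Ballean

variable {X Y : Type u}

/-- A map between balleans is macro-uniform if it maps balls into balls. -/
def MacroUniform (BX : Ballean X) (BY : Ballean Y) (f : X → Y) : Prop :=
  ∀ E ∈ BX.entourages, ∃ E' ∈ BY.entourages, ∀ x : X, f '' ball E x ⊆ ball E' (f x)

/-- A map between balleans is proper if preimages of bounded sets are bounded. -/
def Proper (BX : Ballean X) (BY : Ballean Y) (f : X → Y) : Prop :=
  ∀ S : Set Y, BY.IsBounded S → BX.IsBounded (f ⁻¹' S)

/-- A map between balleans is open if balls around the image are covered by images of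
balls. -/
def OpenMap (BX : Ballean X) (BY : Ballean Y) (f : X → Y) : Prop :=
  ∀ E' ∈ BY.entourages, ∃ E ∈ BX.entourages, ∀ x : X, ball E' (f x) ⊆ f '' ball E x

/-- A map between balleans is closed if it preserves asymptotic disjointness of pairs
`A, B` with `A` saturated. -/
def ClosedMap (BX : Ballean X) (BY : Ballean Y) (f : X → Y) : Prop :=
  ∀ A B : Set X, BX.AsympDisjoint A B → A = f ⁻¹' (f '' A) →
    BY.AsympDisjoint (f '' A) (f '' B)

/-- A map between balleans is bornologous if images of bounded sets are bounded. -/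
def Bornologous (BX : Ballean X) (BY : Ballean Y) (f : X → Y) : Prop :=
  ∀ S : Set X, BX.IsBounded S → BY.IsBounded (f '' S)

end Ballean

/-- a ballean `X` is normal if there exists an asymptotic immersion
`f : X → Y` (a proper macro-uniform map preserving asymptotic disjointness of images)
into a normal ballean `Y`. -/
theorem statement11 {X Y : Type u} (BX : Ballean X) (BY : Ballean Y) (f : X → Y)
    (hmu : Ballean.MacroUniform BX BY f) (hproper : Ballean.Proper BX BY f)
    (himm : ∀ A C : Set X, BX.AsympDisjoint A C → BY.AsympDisjoint (f '' A) (f '' C))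
    (hnorm : BY.Normal) :
    BX.Normal := by
  intro A C hAC
  obtain ⟨U', V', hU', hV', hUV⟩ := hnorm (f '' A) (f '' C) (himm A C hAC)
  refine ⟨f ⁻¹' U', f ⁻¹' V', ?_, ?_, hUV.preimage f⟩
  · intro E hE
    obtain ⟨E', hE', hball⟩ := hmu E hE
    have key : Ballean.img E A \ f ⁻¹' U' ⊆ f ⁻¹' (Ballean.img E' (f '' A) \ U') := by
      rintro x ⟨⟨a, ha, hax⟩, hx⟩
      exact ⟨⟨f a, ⟨a, ha, rfl⟩, hball a ⟨x, hax, rfl⟩⟩, hx⟩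
    obtain ⟨D, hD, z, hsub⟩ := hproper _ (hU' E' hE')
    exact ⟨D, hD, z, key.trans hsub⟩
  · intro E hE
    obtain ⟨E', hE', hball⟩ := hmu E hE
    have key : Ballean.img E C \ f ⁻¹' V' ⊆ f ⁻¹' (Ballean.img E' (f '' C) \ V') := by
      rintro x ⟨⟨a, ha, hax⟩, hx⟩
      exact ⟨⟨f a, ⟨a, ha, rfl⟩, hball a ⟨x, hax, rfl⟩⟩, hx⟩
    obtain ⟨D, hD, z, hsub⟩ := hproper _ (hV' E' hE')
    exact ⟨D, hD, z, key.trans hsub⟩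
end

section
/- A ballean Y is normal if Y is the image of a normal ballean X under a surjective perfect map f : X → Y, i.e., a surjective map that is macro-uniform, closed, and proper. -/
universe u v

open Set

namespace Ballean

variable {X : Type u}

lemma isBounded_mono (B : Ballean X) {S T : Set X} (h : B.IsBounded S) (hts : T ⊆ S) :
    B.IsBounded T := by
  obtain ⟨E, hE, x, hx⟩ := h
  exact ⟨E, hE, x, hts.trans hx⟩

/-- The inverse of an entourage is contained in an entourage. -/
lemma inv_sub (B : Ballean X) {E : Set (X × X)} (hE : E ∈ B.entourages) :
    ∃ D ∈ B.entourages, ∀ p : X × X, (p.2, p.1) ∈ E → p ∈ D := by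
  obtain ⟨D, hD, hsub⟩ := B.comp_inv_sub E hE E hE
  exact ⟨D, hD, fun p hp => hsub ⟨p.1, B.diag_mem E hE p.1, hp⟩⟩

/-- Compositions of entourages are contained in entourages. -/
lemma comp_sub (B : Ballean X) {E F : Set (X × X)} (hE : E ∈ B.entourages)
    (hF : F ∈ B.entourages) :
    ∃ D ∈ B.entourages, ∀ x y z : X, (x, y) ∈ E → (y, z) ∈ F → (x, z) ∈ D := by
  obtain ⟨F', hF', hF'sub⟩ := B.inv_sub hF
  obtain ⟨D, hD, hsub⟩ := B.comp_inv_sub E hE F' hF'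
  refine ⟨D, hD, fun x y z hxy hyz => hsub ⟨y, hxy, hF'sub (z, y) hyz⟩⟩

/-- The `E`-neighborhood of a bounded set is bounded. -/
lemma isBounded_img (B : Ballean X) {S : Set X} (h : B.IsBounded S)
    {E : Set (X × X)} (hE : E ∈ B.entourages) : B.IsBounded (img E S) := by
  obtain ⟨F, hF, x₀, hx₀⟩ := h
  obtain ⟨D, hD, hsub⟩ := B.comp_sub hF hE
  refine ⟨D, hD, x₀, fun x hx => ?_⟩
  obtain ⟨s, hs, hsx⟩ := hx
  exact hsub x₀ s x (hx₀ hs) hsx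

end Ballean

/-- a ballean `Y` is normal if it is the image of a normal ballean `X`
under a surjective perfect (macro-uniform, closed and proper) map `f : X → Y`. -/
theorem statement12 {X Y : Type u} (BX : Ballean X) (BY : Ballean Y) (f : X → Y)
    (hsurj : Function.Surjective f)
    (hmu : Ballean.MacroUniform BX BY f) (hclosed : Ballean.ClosedMap BX BY f)
    (hproper : Ballean.Proper BX BY f)
    (hnorm : BX.Normal) :
    BY.Normal := by
  intro A C hAC
  set A' := f ⁻¹' A with hA'
  set C' := f ⁻¹' C with hC'
  -- the preimages are asymptotically disjoint in X
  have hAC' : BX.AsympDisjoint A' C' := by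
    intro E hE
    obtain ⟨E', hE', hball⟩ := hmu E hE
    refine BX.isBounded_mono (hproper _ (hAC E' hE')) ?_
    rintro x ⟨⟨a, ha, hax⟩, ⟨c, hc, hcx⟩⟩
    constructor
    · exact ⟨f a, ha, hball a ⟨x, hax, rfl⟩⟩
    · exact ⟨f c, hc, hball c ⟨x, hcx, rfl⟩⟩
  obtain ⟨U, V, hU, hV, hUV⟩ := hnorm A' C' hAC'
  -- preimages of A and C are saturated
  have hsatA : A' = f ⁻¹' (f '' A') := by
    rw [hA', Set.image_preimage_eq A hsurj]
  have hsatC : C' = f ⁻¹' (f '' C') := by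
    rw [hC', Set.image_preimage_eq C hsurj]
  have himgA : f '' A' = A := Set.image_preimage_eq A hsurj
  have himgC : f '' C' = C := Set.image_preimage_eq C hsurj
  -- key step: if W is an asymptotic neighborhood of S in X with S saturated,
  -- then the preimage-saturated set gives an asymptotic disjointness
  have key : ∀ (S W : Set X), BX.AsympNbhd S W → S = f ⁻¹' (f '' S) →
      BY.AsympDisjoint (f '' S) (f '' Wᶜ) := by
    intro S W hW hsat
    refine hclosed S Wᶜ ?_ hsat
    intro E hE
    obtain ⟨D, hD, hsub⟩ := BX.comp_inv_sub E hE E hE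
    have hb : BX.IsBounded (Ballean.img E (Ballean.img D S \ W)) :=
      BX.isBounded_img (hW D hD) hE
    refine BX.isBounded_mono hb ?_
    rintro x ⟨⟨a, ha, hax⟩, ⟨z, hz, hzx⟩⟩
    refine ⟨z, ⟨⟨a, ha, hsub ⟨x, hax, hzx⟩⟩, hz⟩, hzx⟩
  have hdA : BY.AsympDisjoint A (f '' Uᶜ) := by
    have := key A' U hU hsatA
    rwa [himgA] at this
  have hdC : BY.AsympDisjoint C (f '' Vᶜ) := by
    have := key C' V hV hsatC
    rwa [himgC] at this
  refine ⟨(f '' Uᶜ)ᶜ, (f '' Vᶜ)ᶜ, ?_, ?_, ?_⟩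
  · intro E' hE'
    refine BY.isBounded_mono (hdA E' hE') ?_
    rintro y ⟨hy1, hy2⟩
    rw [Set.notMem_compl_iff] at hy2
    exact ⟨hy1, ⟨y, hy2, BY.diag_mem E' hE' y⟩⟩
  · intro E' hE'
    refine BY.isBounded_mono (hdC E' hE') ?_
    rintro y ⟨hy1, hy2⟩
    rw [Set.notMem_compl_iff] at hy2
    exact ⟨hy1, ⟨y, hy2, BY.diag_mem E' hE' y⟩⟩
  · rw [Set.disjoint_iff]
    rintro y ⟨hyU, hyV⟩
    obtain ⟨x, rfl⟩ := hsurj y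
    have hxU : x ∈ U := by
      by_contra hx
      exact hyU ⟨x, hx, rfl⟩
    have hxV : x ∈ V := by
      by_contra hx
      exact hyV ⟨x, hx, rfl⟩
    exact (Set.disjoint_iff.mp hUV) ⟨hxU, hxV⟩
end

section
/- A ballean Y is normal if Y is the image of a normal ballean X under an open macro-uniform map f : X → Y that admits a bornologous section s : Y → X (i.e., f ∘ s = id_Y and s maps bounded sets to bounded sets). -/
universe u v

open Set

section Aux

variable {X : Type u}

/-- Every entourage is contained in a symmetric-closed entourage. -/
lemma sym_ent (B : Ballean X) {E : Set (X × X)} (hE : E ∈ B.entourages) :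
    ∃ D ∈ B.entourages, ∀ a b : X, (a, b) ∈ E → (a, b) ∈ D ∧ (b, a) ∈ D := by
  obtain ⟨D, hD, hsub⟩ := B.comp_inv_sub E hE E hE
  exact ⟨D, hD, fun a b hab =>
    ⟨hsub ⟨b, hab, B.diag_mem E hE b⟩, hsub ⟨b, B.diag_mem E hE b, hab⟩⟩⟩

/-- Compositions of entourages are contained in entourages. -/
lemma comp_ent (B : Ballean X) {E F : Set (X × X)} (hE : E ∈ B.entourages)
    (hF : F ∈ B.entourages) :
    ∃ D ∈ B.entourages, ∀ a b c : X, (a, b) ∈ E → (b, c) ∈ F → (a, c) ∈ D := by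
  obtain ⟨F', hF', hFsym⟩ := sym_ent B hF
  obtain ⟨D, hD, hsub⟩ := B.comp_inv_sub E hE F' hF'
  exact ⟨D, hD, fun a b c hab hbc => hsub ⟨b, hab, (hFsym b c hbc).2⟩⟩

lemma bounded_subset (B : Ballean X) {S T : Set X} (hST : S ⊆ T)
    (hT : B.IsBounded T) : B.IsBounded S := by
  obtain ⟨E, hE, x, hx⟩ := hT
  exact ⟨E, hE, x, hST.trans hx⟩

/-- Entourage-images of bounded sets are bounded. -/
lemma bounded_img (B : Ballean X) {E : Set (X × X)} (hE : E ∈ B.entourages)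
    {S : Set X} (hS : B.IsBounded S) : B.IsBounded (Ballean.img E S) := by
  obtain ⟨E₀, hE₀, x₀, hx₀⟩ := hS
  obtain ⟨D, hD, hcomp⟩ := comp_ent B hE₀ hE
  refine ⟨D, hD, x₀, fun y hy => ?_⟩
  obtain ⟨a, haS, haE⟩ := hy
  exact hcomp x₀ a y (hx₀ haS) haE

/-- Macro-uniform maps are bornologous. -/
lemma mu_born {Y : Type u} (BX : Ballean X) (BY : Ballean Y) (f : X → Y)
    (hmu : Ballean.MacroUniform BX BY f) : Ballean.Bornologous BX BY f := by
  intro S hS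
  obtain ⟨E, hE, x, hx⟩ := hS
  obtain ⟨E', hE', hball⟩ := hmu E hE
  refine ⟨E', hE', f x, ?_⟩
  rintro y ⟨a, haS, rfl⟩
  exact hball x ⟨a, hx haS, rfl⟩

end Aux

/-- STATEMENT 13: a ballean `Y` is normal if it is the image of a normal ballean `X`
under an open macro-uniform map `f : X → Y` admitting a bornologous section `s : Y → X`. -/
theorem statement13 {X Y : Type u} (BX : Ballean X) (BY : Ballean Y) (f : X → Y)
    (hmu : Ballean.MacroUniform BX BY f) (hopen : Ballean.OpenMap BX BY f)
    (s : Y → X) (hsec : ∀ y : Y, f (s y) = y)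
    (hborn : Ballean.Bornologous BY BX s)
    (hnorm : BX.Normal) :
    BY.Normal := by
  intro A C hAC
  -- Step 1: `s '' A` and `f ⁻¹' C` are asymptotically disjoint in `X`.
  have key : BX.AsympDisjoint (s '' A) (f ⁻¹' C) := by
    intro E hE
    obtain ⟨E', hE', hball⟩ := hmu E hE
    obtain ⟨F, hF, y₀, hS⟩ := hAC E' hE'
    obtain ⟨D', hD', hDsub⟩ := BY.comp_inv_sub F hF E' hE'
    obtain ⟨G, hG, z₀, hGsub⟩ := hborn (Ballean.ball D' y₀) ⟨D', hD', y₀, subset_rfl⟩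
    obtain ⟨H, hH, hHcomp⟩ := comp_ent BX hG hE
    refine ⟨H, hH, z₀, fun x hx => ?_⟩
    obtain ⟨⟨p, ⟨a, haA, rfl⟩, hpx⟩, ⟨q, hqC, hqx⟩⟩ := hx
    -- `f x` lies in `img E' A ∩ img E' C`, hence is `F`-close to `y₀`.
    have hfa : (a, f x) ∈ E' := by
      have := hball (s a) ⟨x, hpx, rfl⟩
      rwa [hsec a] at this
    have hfc : f x ∈ Ballean.img E' C := ⟨f q, hqC, hball q ⟨x, hqx, rfl⟩⟩
    have hfx : (y₀, f x) ∈ F := hS ⟨⟨a, haA, hfa⟩, hfc⟩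
    -- hence `a` is `D'`-close to `y₀`, so `s a` is `G`-close to `z₀`.
    have haD : (y₀, a) ∈ D' := hDsub ⟨f x, hfx, hfa⟩
    have hsa : (z₀, s a) ∈ G := hGsub ⟨a, haD, rfl⟩
    exact hHcomp z₀ (s a) x hsa hpx
  -- Step 2: get disjoint asymptotic neighborhoods in `X`.
  obtain ⟨U', V', hU', hV', hdisj⟩ := hnorm (s '' A) (f ⁻¹' C) key
  refine ⟨f '' U', {y | ∀ x : X, f x = y → x ∈ V'}, ?_, ?_, ?_⟩
  · -- `f '' U'` is an asymptotic neighborhood of `A`.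
    intro E' hE'
    obtain ⟨E, hE, hopenball⟩ := hopen E' hE'
    have hZ : BX.IsBounded (Ballean.img E (s '' A) \ U') := hU' E hE
    refine bounded_subset BY (fun y hy => ?_) (mu_born BX BY f hmu _ hZ)
    obtain ⟨⟨a, haA, hay⟩, hyU⟩ := hy
    have : y ∈ Ballean.ball E' (f (s a)) := by
      show (f (s a), y) ∈ E'; rwa [hsec a]
    obtain ⟨x, hxE, rfl⟩ := hopenball (s a) this
    have hxU' : x ∉ U' := fun h => hyU ⟨x, h, rfl⟩
    exact ⟨x, ⟨⟨s a, ⟨a, haA, rfl⟩, hxE⟩, hxU'⟩, rfl⟩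
  · -- the co-image of `V'` is an asymptotic neighborhood of `C`.
    intro E' hE'
    obtain ⟨D', hD', hDsym⟩ := sym_ent BY hE'
    obtain ⟨E, hE, hopenball⟩ := hopen D' hD'
    obtain ⟨F, hF, hFsym⟩ := sym_ent BX hE
    have hZ : BX.IsBounded (Ballean.img F (f ⁻¹' C) \ V') := hV' F hF
    refine bounded_subset BY (fun y hy => ?_) (mu_born BX BY f hmu _ hZ)
    obtain ⟨⟨c, hcC, hcy⟩, hyV⟩ := hy
    simp only [Set.mem_setOf_eq, not_forall] at hyV
    obtain ⟨x, hfx, hxV'⟩ := hyV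
    have hcx : c ∈ Ballean.ball D' (f x) := by
      show (f x, c) ∈ D'
      rw [hfx]
      exact (hDsym c y hcy).2
    obtain ⟨x', hx'E, hx'c⟩ := hopenball x hcx
    have hx'C : x' ∈ f ⁻¹' C := by show f x' ∈ C; rw [hx'c]; exact hcC
    refine ⟨x, ⟨⟨x', hx'C, (hFsym x x' hx'E).2⟩, hxV'⟩, hfx⟩
  · -- disjointness.
    rw [Set.disjoint_left]
    rintro y ⟨u, huU', rfl⟩ hyV
    exact Set.disjoint_left.mp hdisj huU' (hyV u rfl)
end

section
/- Let P and Q be two unbounded partially ordered sets (i.e., neither P nor Q has an element that is an upper bound of the whole set). Assume there exist functions φ : P → Q and ψ : Q → P such that for any x ∈ P and y ∈ Q, either x ≤ ψ(y) or y ≤ φ(x). Then add(P) = cof(P) = cof(Q) = add(Q), where for a partially ordered set R, cof(R) denotes the smallest cardinality of a cofinal subset of R (a set C such that every element of R lies below some element of C) and add(R) denotes the smallest cardinality of a subset of R having no upper bound in R. -/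
universe u

/-- The additivity of a partially ordered set: the smallest cardinality of an unbounded
subset. -/
noncomputable def posetAdd (P : Type u) [PartialOrder P] : Cardinal.{u} :=
  sInf {c | ∃ A : Set P, (¬ ∃ y : P, ∀ x ∈ A, x ≤ y) ∧ c = Cardinal.mk ↥A}

/-- The cofinality of a partially ordered set: the smallest cardinality of a cofinal
subset. -/
noncomputable def posetCof (P : Type u) [PartialOrder P] : Cardinal.{u} :=
  sInf {c | ∃ A : Set P, (∀ x : P, ∃ y ∈ A, x ≤ y) ∧ c = Cardinal.mk ↥A}

lemma cofSet_nonempty (P : Type u) [PartialOrder P] :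
    {c | ∃ A : Set P, (∀ x : P, ∃ y ∈ A, x ≤ y) ∧ c = Cardinal.mk ↥A}.Nonempty :=
  ⟨Cardinal.mk ↥(Set.univ : Set P), Set.univ,
    fun x => ⟨x, Set.mem_univ x, le_rfl⟩, rfl⟩

lemma addSet_nonempty (P : Type u) [PartialOrder P] (hP : ¬ ∃ y : P, ∀ x : P, x ≤ y) :
    {c | ∃ A : Set P, (¬ ∃ y : P, ∀ x ∈ A, x ≤ y) ∧ c = Cardinal.mk ↥A}.Nonempty :=
  ⟨Cardinal.mk ↥(Set.univ : Set P), Set.univ,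
    fun ⟨y, hy⟩ => hP ⟨y, fun x => hy x (Set.mem_univ x)⟩, rfl⟩

lemma cof_le_of {P : Type u} [PartialOrder P] (D : Set P) (hD : ∀ x : P, ∃ y ∈ D, x ≤ y) :
    posetCof P ≤ Cardinal.mk ↥D :=
  csInf_le' ⟨D, hD, rfl⟩

lemma add_le_of {P : Type u} [PartialOrder P] (A : Set P) (hA : ¬ ∃ y : P, ∀ x ∈ A, x ≤ y) :
    posetAdd P ≤ Cardinal.mk ↥A :=
  csInf_le' ⟨A, hA, rfl⟩

lemma add_le_cof_self (P : Type u) [PartialOrder P] (hP : ¬ ∃ y : P, ∀ x : P, x ≤ y) :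
    posetAdd P ≤ posetCof P := by
  apply le_csInf (cofSet_nonempty P)
  rintro c ⟨C, hC, rfl⟩
  apply add_le_of C
  rintro ⟨y, hy⟩
  exact hP ⟨y, fun x => by obtain ⟨z, hz, hxz⟩ := hC x; exact hxz.trans (hy z hz)⟩

lemma cof_le_add {P Q : Type u} [PartialOrder P] [PartialOrder Q]
    (φ : P → Q) (ψ : Q → P)
    (h : ∀ (x : P) (y : Q), x ≤ ψ y ∨ y ≤ φ x)
    (hP : ¬ ∃ y : P, ∀ x : P, x ≤ y) :
    posetCof Q ≤ posetAdd P := by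
  apply le_csInf (addSet_nonempty P hP)
  rintro c ⟨A, hA, rfl⟩
  push_neg at hA
  refine (cof_le_of (φ '' A) ?_).trans Cardinal.mk_image_le
  intro y
  obtain ⟨x, hxA, hx⟩ := hA (ψ y)
  rcases h x y with h1 | h1
  · exact absurd h1 hx
  · exact ⟨φ x, ⟨x, hxA, rfl⟩, h1⟩

lemma add_le_cof {P Q : Type u} [PartialOrder P] [PartialOrder Q]
    (φ : P → Q) (ψ : Q → P)
    (h : ∀ (x : P) (y : Q), x ≤ ψ y ∨ y ≤ φ x)
    (hP : ¬ ∃ y : P, ∀ x : P, x ≤ y) (hQ : ¬ ∃ y : Q, ∀ x : Q, x ≤ y) :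
    posetAdd P ≤ posetCof Q := by
  apply le_csInf (cofSet_nonempty Q)
  rintro c ⟨D, hD, rfl⟩
  refine (add_le_of (ψ '' D) ?_).trans Cardinal.mk_image_le
  rintro ⟨p, hp⟩
  push_neg at hP
  obtain ⟨x, hx⟩ := hP p
  apply hQ
  refine ⟨φ x, fun z => ?_⟩
  obtain ⟨y, hyD, hzy⟩ := hD z
  rcases h x y with h1 | h1
  · exact absurd (h1.trans (hp (ψ y) ⟨y, hyD, rfl⟩)) hx
  · exact hzy.trans h1

/-- STATEMENT 15: if `P, Q` are unbounded posets and there are `φ : P → Q`, `ψ : Q → P`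
such that for all `x ∈ P`, `y ∈ Q` either `x ≤ ψ(y)` or `y ≤ φ(x)`, then
`add(P) = cof(P) = cof(Q) = add(Q)`. -/
theorem statement15 {P Q : Type u} [PartialOrder P] [PartialOrder Q]
    (hP : ¬ ∃ y : P, ∀ x : P, x ≤ y) (hQ : ¬ ∃ y : Q, ∀ x : Q, x ≤ y)
    (φ : P → Q) (ψ : Q → P)
    (h : ∀ (x : P) (y : Q), x ≤ ψ y ∨ y ≤ φ x) :
    posetAdd P = posetCof P ∧ posetCof P = posetCof Q ∧ posetCof Q = posetAdd Q := by
  have h' : ∀ (y : Q) (x : P), y ≤ φ x ∨ x ≤ ψ y := fun y x => (h x y).symm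
  have e1 : posetAdd P = posetCof Q :=
    le_antisymm (add_le_cof φ ψ h hP hQ) (cof_le_add φ ψ h hP)
  have e2 : posetAdd Q = posetCof P :=
    le_antisymm (add_le_cof ψ φ h' hQ hP) (cof_le_add ψ φ h' hQ)
  have e3 := add_le_cof_self P hP
  have e4 := add_le_cof_self Q hQ
  have e5 : posetAdd P = posetAdd Q :=
    le_antisymm (e3.trans e2.ge) (e4.trans e1.ge)
  exact ⟨e5.trans e2, e2.symm.trans (e5.symm.trans e1), e1.symm.trans e5⟩
end
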